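/- Over the field 𝔽₂, consider the vector space V with basis the eight symbols {x₁,z₂}, {x₂,z₁}, {y̌₁,ŷ₂}, {ŷ₁,y̌₂}, {z₁,z₂}, {x₁,x₂}, {y̌₁,y̌₂}, {ŷ₁,ŷ₂}, and the linear map d : V → V defined by d{x₁,z₂} = {ŷ₁,y̌₂} + {y̌₁,ŷ₂}, d{x₂,z₁} = {ŷ₁,y̌₂} + {y̌₁,ŷ₂}, d{y̌₁,ŷ₂} = {z₁,z₂}, d{ŷ₁,y̌₂} = {z₁,z₂}, and d = 0 on the remaining four basis elements. Then d ∘ d = 0, and the cohomology ker(d)/im(d) has dimension 4 over 𝔽₂, with basis represented by {x₁,x₂}, {x₂,z₁} + {x₁,z₂}, {y̌₁,y̌₂}, {ŷ₁,ŷ₂}. -/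

import Mathlib

/-!  The cochain complex (with `ħ = 1`, coefficients `𝔽₂`) of the left-handed Hopf link.
Basis indexing of the eight generators:
0 = {x₁,z₂}, 1 = {x₂,z₁}, 2 = {y̌₁,ŷ₂}, 3 = {ŷ₁,y̌₂}, 4 = {z₁,z₂},
5 = {x₁,x₂}, 6 = {y̌₁,y̌₂}, 7 = {ŷ₁,ŷ₂}.  -/

/-- The underlying `𝔽₂`-vector space with eight basis vectors. -/
abbrev HopfV : Type := Fin 8 → ZMod 2

/-- The `i`-th basis vector. -/
def hopfGen (i : Fin 8) : HopfV := Pi.single i 1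

/-- The differential of the left-handed Hopf link complex:
`d{x₁,z₂} = {ŷ₁,y̌₂} + {y̌₁,ŷ₂}`, `d{x₂,z₁} = {ŷ₁,y̌₂} + {y̌₁,ŷ₂}`,
`d{y̌₁,ŷ₂} = {z₁,z₂}`, `d{ŷ₁,y̌₂} = {z₁,z₂}`, `d = 0` otherwise. -/
noncomputable def hopfLeftD : HopfV →ₗ[ZMod 2] HopfV :=
  Matrix.toLin' (Matrix.of fun i j : Fin 8 =>
    if ((i : ℕ), (j : ℕ)) ∈ [(2, 0), (3, 0), (2, 1), (3, 1), (4, 2), (4, 3)] then 1 else 0)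

/-- The cohomology `ker d / im d` of the left-handed Hopf link complex. -/
noncomputable abbrev hopfLeftCohomology :=
  LinearMap.ker hopfLeftD ⧸
    Submodule.comap (LinearMap.ker hopfLeftD).subtype (LinearMap.range hopfLeftD)


/-! A cocycle `v` has `v 0 = v 1` and `v 2 = v 3`, and the coboundaries are the vectors
`(0, 0, a, a, b, 0, 0, 0)`; so a cocycle is a coboundary exactly when its coordinates at
`{x₁,x₂}`, `{x₁,z₂}`, `{y̌₁,y̌₂}`, `{ŷ₁,ŷ₂}` vanish. These four coordinates therefore identify the
cohomology with `𝔽₂⁴`, and they send the four listed cocycles to its standard basis. -/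

theorem Submodule.exists_basis_quotient_of_ker_eq {R M ι : Type*} [Ring R] [AddCommGroup M]
    [Module R M] [Fintype ι] [DecidableEq ι] {N : Submodule R M} (ψ : M →ₗ[R] ι → R)
    (hψ : LinearMap.ker ψ = N) (v : ι → M) (hv : ∀ i, ψ (v i) = Pi.single i 1) :
    ∃ b : Module.Basis ι R (M ⧸ N), ∀ i, b i = Submodule.Quotient.mk (v i) := by
  have hsurj : Function.Surjective ψ := fun c =>
    ⟨∑ i, c i • v i, by simp [hv, ← pi_eq_sum_univ']⟩
  let e := (Submodule.quotEquivOfEq _ _ hψ.symm).trans (ψ.quotKerEquivOfSurjective hsurj)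
  refine ⟨Module.Basis.ofEquivFun e, fun i => ?_⟩
  rw [Module.Basis.coe_ofEquivFun, LinearEquiv.symm_apply_eq]
  exact (hv i).symm

lemma hopfLeftD_apply (v : HopfV) :
    hopfLeftD v = ![0, 0, v 0 + v 1, v 0 + v 1, v 2 + v 3, 0, 0, 0] := by
  funext i
  fin_cases i <;>
    simp +decide [hopfLeftD, Matrix.toLin'_apply, Matrix.mulVec, dotProduct,
      Fin.sum_univ_eight]

lemma hopfLeftD_comp_self : hopfLeftD ∘ₗ hopfLeftD = 0 := by
  ext v i
  fin_cases i <;> simp [hopfLeftD_apply, CharTwo.add_self_eq_zero]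

lemma mem_ker_hopfLeftD_iff {v : HopfV} :
    v ∈ LinearMap.ker hopfLeftD ↔ v 0 = v 1 ∧ v 2 = v 3 := by
  rw [LinearMap.mem_ker, hopfLeftD_apply, funext_iff]
  simp [Fin.forall_fin_succ, CharTwo.add_eq_zero]

lemma mem_range_hopfLeftD_iff {w : HopfV} :
    w ∈ LinearMap.range hopfLeftD ↔
      w 0 = 0 ∧ w 1 = 0 ∧ w 2 = w 3 ∧ w 5 = 0 ∧ w 6 = 0 ∧ w 7 = 0 := by
  constructor
  · rintro ⟨v, rfl⟩
    simp [hopfLeftD_apply]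
  · rintro ⟨h0, h1, h23, h5, h6, h7⟩
    exact ⟨![w 2, 0, w 4, 0, 0, 0, 0, 0], by ext i; fin_cases i <;> simp [hopfLeftD_apply, *]⟩

def hopfCoords : HopfV →ₗ[ZMod 2] Fin 4 → ZMod 2 :=
  LinearMap.pi ![LinearMap.proj 5, LinearMap.proj 0, LinearMap.proj 6, LinearMap.proj 7]

lemma ker_hopfCoords_comp_subtype :
    LinearMap.ker (hopfCoords ∘ₗ (LinearMap.ker hopfLeftD).subtype) =
      (LinearMap.range hopfLeftD).comap (LinearMap.ker hopfLeftD).subtype := by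
  ext ⟨v, hv⟩
  obtain ⟨h1, h3⟩ := mem_ker_hopfLeftD_iff.mp hv
  rw [LinearMap.mem_ker, Submodule.mem_comap, Submodule.subtype_apply, mem_range_hopfLeftD_iff]
  simp [hopfCoords, funext_iff, Fin.forall_fin_succ, ← h1, ← h3, and_left_comm]

/-- `d ∘ d = 0`, the cohomology has dimension 4 over `𝔽₂`, and it has a basis
represented by `{x₁,x₂}`, `{x₂,z₁} + {x₁,z₂}`, `{y̌₁,y̌₂}`, `{ŷ₁,ŷ₂}`. -/
theorem hopf_left_cohomology :
    hopfLeftD ∘ₗ hopfLeftD = 0 ∧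
    Module.finrank (ZMod 2) hopfLeftCohomology = 4 ∧
    ∃ (hmem : ∀ i : Fin 4,
        (![hopfGen 5, hopfGen 1 + hopfGen 0, hopfGen 6, hopfGen 7] i) ∈
          LinearMap.ker hopfLeftD)
      (b : Module.Basis (Fin 4) (ZMod 2) hopfLeftCohomology),
      ∀ i : Fin 4, b i = Submodule.Quotient.mk
        ⟨![hopfGen 5, hopfGen 1 + hopfGen 0, hopfGen 6, hopfGen 7] i, hmem i⟩ := by
  have hmem : ∀ i : Fin 4,
      (![hopfGen 5, hopfGen 1 + hopfGen 0, hopfGen 6, hopfGen 7] i) ∈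
        LinearMap.ker hopfLeftD := by
    intro i
    fin_cases i <;> exact mem_ker_hopfLeftD_iff.mpr ⟨by decide, by decide⟩
  have hcoords : ∀ i : Fin 4, hopfCoords
      (![hopfGen 5, hopfGen 1 + hopfGen 0, hopfGen 6, hopfGen 7] i) = Pi.single i 1 := by
    decide
  obtain ⟨b, hb⟩ := Submodule.exists_basis_quotient_of_ker_eq _ ker_hopfCoords_comp_subtype
    (fun i => ⟨_, hmem i⟩) hcoords
  exact ⟨hopfLeftD_comp_self, by simpa using Module.finrank_eq_card_basis b, hmem, b, hb⟩
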